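/- arXiv:1903.07157 — 2 statements merged into one kernel-verified Lean document; each statement's English description precedes it below -/
import Mathlib

section
/- (Maximum causal entropy equals maximum causal log-likelihood, Theorem 2 of the paper.) Let P* be a human model (the true behavior), Q a machine policy, 𝓖 = ∅ (no inequality features), and set c_f := E_{P*Q}[f(H^T,M^T)] (statistics from the true distribution, without sampling error). If λ̂ ∈ ℝ^𝓕 maximizes the expected causal log-likelihood λ ↦ E_{P*Q}[log P_λ(H^T‖M^T)] over λ ∈ ℝ^𝓕, then the causal Gibbs model P_{λ̂} satisfies the feature constraints E_{P_{λ̂}Q}[f(H^T,M^T)] = c_f and maximizes the causally conditioned entropy H_{PQ}(H^T‖M^T) over all human models P with E_{PQ}[f(H^T,M^T)] = c_f. -/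
/-! Common framework: finite-horizon human–machine interaction processes.
Times are 0-indexed: step `t : Fin T` corresponds to the paper's step `t+1`.
A human model gives conditional PMFs `P(h_t | h^{t-1}, m^t)`: the value
`p t h m a` may depend only on `h s` for `s < t`, on `m s` for `s ≤ t`, and on `a`.
A machine policy gives conditional PMFs `Q(m_t | h^{t-1}, m^{t-1})`: the value
`q t h m b` may depend only on `h s`, `m s` for `s < t`, and on `b`. -/

structure HumanModel (T : ℕ) (H M : Type*) [Fintype H] where
  p : Fin T → (Fin T → H) → (Fin T → M) → H → ℝ
  causal : ∀ (t : Fin T) (h h' : Fin T → H) (m m' : Fin T → M),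
      (∀ s, s < t → h s = h' s) → (∀ s, s ≤ t → m s = m' s) → p t h m = p t h' m'
  nonneg : ∀ t h m a, 0 ≤ p t h m a
  sum_one : ∀ t h m, ∑ a, p t h m a = 1

structure MachinePolicy (T : ℕ) (H M : Type*) [Fintype M] where
  q : Fin T → (Fin T → H) → (Fin T → M) → M → ℝ
  causal : ∀ (t : Fin T) (h h' : Fin T → H) (m m' : Fin T → M),
      (∀ s, s < t → h s = h' s) → (∀ s, s < t → m s = m' s) → q t h m = q t h' m'
  nonneg : ∀ t h m b, 0 ≤ q t h m b
  sum_one : ∀ t h m, ∑ b, q t h m b = 1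

variable {T : ℕ} {H M : Type*} [Fintype H] [Fintype M]

/-- Causally conditioned distribution of the human: `P(h^T ‖ m^T)`. -/
noncomputable def HumanModel.cc (P : HumanModel T H M) (h : Fin T → H) (m : Fin T → M) : ℝ :=
  ∏ t, P.p t h m (h t)

/-- Causally conditioned distribution of the machine: `Q(m^T ‖ h^T)`. -/
noncomputable def MachinePolicy.cc (Q : MachinePolicy T H M) (h : Fin T → H) (m : Fin T → M) : ℝ :=
  ∏ t, Q.q t h m (m t)

/-- Joint PMF `PQ(h^T, m^T)`. -/
noncomputable def jointPMF (P : HumanModel T H M) (Q : MachinePolicy T H M)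
    (h : Fin T → H) (m : Fin T → M) : ℝ :=
  P.cc h m * Q.cc h m

/-- Expectation `E_{PQ}[φ(H^T, M^T)]`. -/
noncomputable def expVal (P : HumanModel T H M) (Q : MachinePolicy T H M)
    (φ : (Fin T → H) → (Fin T → M) → ℝ) : ℝ :=
  ∑ h : Fin T → H, ∑ m : Fin T → M, jointPMF P Q h m * φ h m

/-- Causally conditioned entropy of the human, `H_{PQ}(H^T ‖ M^T)`. -/
noncomputable def humanEntropy (P : HumanModel T H M) (Q : MachinePolicy T H M) : ℝ :=
  ∑ h : Fin T → H, ∑ m : Fin T → M, jointPMF P Q h m * (- Real.log (P.cc h m))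

/-- Causally conditioned entropy of the machine, `H_{PQ}(M^T ‖ H^T)`. -/
noncomputable def machineEntropy (P : HumanModel T H M) (Q : MachinePolicy T H M) : ℝ :=
  ∑ h : Fin T → H, ∑ m : Fin T → M, jointPMF P Q h m * (- Real.log (Q.cc h m))

lemma idx_lt (T k : ℕ) [NeZero T] : T - 1 - k < T := by
  have := Nat.pos_of_ne_zero (NeZero.ne T); omega

variable [NeZero T]

/-- Backward recursion for `Z_λ(h_t | h^{t-1}, m^t)`, parameterized by fuel `k = (T-1) - t`.
`Zaux Q φ k h m` is `Z_λ(h_t | h^{t-1}, m^t)` at (0-indexed) step `t = T - 1 - k`, where the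
current human action `h_t` is read off as `h t`. The terminal exponent `φ h m` plays the
role of `λ_f·f(h^T,m^T) + λ_g·g(h^T,m^T)`. -/
noncomputable def Zaux (Q : MachinePolicy T H M)
    (φ : (Fin T → H) → (Fin T → M) → ℝ) :
    ℕ → (Fin T → H) → (Fin T → M) → ℝ
  | 0, h, m => Real.exp (φ h m)
  | k + 1, h, m =>
      Real.exp (∑ b : M, Q.q ⟨T - 1 - k, idx_lt T k⟩ h m b *
        Real.log (∑ a : H, Zaux Q φ k
          (Function.update h ⟨T - 1 - k, idx_lt T k⟩ a)
          (Function.update m ⟨T - 1 - k, idx_lt T k⟩ b)))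

/-- `Z_λ(h_t | h^{t-1}, m^t)` at step `t`, with `h_t = h t`. -/
noncomputable def Zcond (Q : MachinePolicy T H M)
    (φ : (Fin T → H) → (Fin T → M) → ℝ) (t : Fin T)
    (h : Fin T → H) (m : Fin T → M) : ℝ :=
  Zaux Q φ (T - 1 - t.val) h m

/-- `Z_λ(h^{t-1}, m^t) = Σ_{h_t} Z_λ(h_t | h^{t-1}, m^t)`. -/
noncomputable def Zmarg (Q : MachinePolicy T H M)
    (φ : (Fin T → H) → (Fin T → M) → ℝ) (t : Fin T)
    (h : Fin T → H) (m : Fin T → M) : ℝ :=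
  ∑ a : H, Zcond Q φ t (Function.update h t a) m

variable [Nonempty H] [Nonempty M]

/-- `Σ_{m_1} Q(m_1) · log Z_λ(m_1)` (the log-partition part of the dual objective).
By causality of `Q` and of the recursion, the choice of base sequences is immaterial. -/
noncomputable def dualPartition (Q : MachinePolicy T H M)
    (φ : (Fin T → H) → (Fin T → M) → ℝ) : ℝ :=
  ∑ b : M, Q.q 0 (Classical.arbitrary _) (Classical.arbitrary _) b *
    Real.log (Zmarg Q φ 0 (Classical.arbitrary _)
      (Function.update (Classical.arbitrary (Fin T → M)) 0 b))

/-- `P` is the causal Gibbs human model `P_λ` associated with machine policy `Q` and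
terminal exponent `φ`: `P_λ(h_t | h^{t-1}, m^t) = Z_λ(h_t | h^{t-1}, m^t) / Z_λ(h^{t-1}, m^t)`. -/
def IsGibbs (Q : MachinePolicy T H M)
    (φ : (Fin T → H) → (Fin T → M) → ℝ) (P : HumanModel T H M) : Prop :=
  ∀ (t : Fin T) (h : Fin T → H) (m : Fin T → M) (a : H),
    P.p t h m a = Zcond Q φ t (Function.update h t a) m / Zmarg Q φ t h m

/-- The causally conditioned distribution of the causal Gibbs model:
`P_λ(h^T‖m^T) = ∏_t Z_λ(h_t | h^{t-1}, m^t) / Z_λ(h^{t-1}, m^t)`. -/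
noncomputable def gibbsCC (Q : MachinePolicy T H M)
    (φ : (Fin T → H) → (Fin T → M) → ℝ) (h : Fin T → H) (m : Fin T → M) : ℝ :=
  ∏ t, Zcond Q φ t h m / Zmarg Q φ t h m

/-!
For every human model `P`, the expected causal log-likelihood of a causal Gibbs model telescopes
along the backward recursion for `Z_λ`: `E_{PQ}[log P_λ] = λ·E_{PQ}[f] - Λ(λ)`, where
`Λ(λ) = Σ_{m_1} Q(m_1) log Z_λ(m_1)` does not depend on `P`.

Write `c = E_{P*Q}[f]` and `μ(λ) = E_{P_λ Q}[f]`. Optimality of `λ̂` gives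
`(λ - λ̂)·c ≤ Λ(λ) - Λ(λ̂)`, and Gibbs' inequality under `P_λ` gives
`Λ(λ) - Λ(λ̂) ≤ (λ - λ̂)·μ(λ)`. Hence `(λ - λ̂)·(μ(λ) - c) ≥ 0` for all `λ`; moving `λ` along a
coordinate line through `λ̂` and using continuity of `μ` forces `μ(λ̂) = c`. Finally, if
`E_{PQ}[f] = c`, Gibbs' inequality gives
`-H_{PQ} = E_{PQ}[log P] ≥ E_{PQ}[log P_λ̂] = λ̂·c - Λ(λ̂) = E_{P_λ̂ Q}[log P_λ̂] = -H_{P_λ̂ Q}`.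
-/

open Finset Function

theorem sum_sum_update_update {α β γ : Type*} [Fintype α] [Fintype β] [Fintype γ]
    [DecidableEq α] (i : α) (F : (α → β) → (α → γ) → ℝ) :
    ∑ g : α → β, ∑ g' : α → γ, ∑ b : γ, ∑ a : β, F (update g i a) (update g' i b)
      = (Fintype.card β * Fintype.card γ) * ∑ g : α → β, ∑ g' : α → γ, F g g' := by
  have hinv : Involutive fun p : ((α → β) × (α → γ)) × (γ × β) =>
      ((update p.1.1 i p.2.2, update p.1.2 i p.2.1), (p.1.2 i, p.1.1 i)) := by
    intro p
    simp
  calc ∑ g : α → β, ∑ g' : α → γ, ∑ b : γ, ∑ a : β, F (update g i a) (update g' i b)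
      = ∑ p : ((α → β) × (α → γ)) × (γ × β), F (update p.1.1 i p.2.2) (update p.1.2 i p.2.1) := by
        simp [Fintype.sum_prod_type]
    _ = ∑ p : ((α → β) × (α → γ)) × (γ × β), F p.1.1 p.1.2 :=
        Fintype.sum_bijective _ hinv.bijective _ _ fun _ => rfl
    _ = (Fintype.card β * Fintype.card γ) * ∑ g : α → β, ∑ g' : α → γ, F g g' := by
        simp [Fintype.sum_prod_type, Finset.mul_sum, mul_comm]

theorem Real.mul_log_le_mul_log_add_sub {p r : ℝ} (hp : 0 ≤ p) (hr : 0 < r) :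
    p * Real.log r ≤ p * Real.log p + (r - p) := by
  rcases hp.eq_or_lt with rfl | hp
  · simpa using hr.le
  have h := Real.log_le_sub_one_of_pos (div_pos hr hp)
  rw [Real.log_div hr.ne' hp.ne'] at h
  have h' := mul_le_mul_of_nonneg_left h hp.le
  rw [mul_sub_one, mul_div_cancel₀ r hp.ne'] at h'
  linarith

theorem eq_of_forall_mul_sub_nonneg {g : ℝ → ℝ} {c : ℝ} (hg : ContinuousAt g 0)
    (h : ∀ s, 0 ≤ s * (g s - c)) : g 0 = c := by
  refine le_antisymm (le_of_tendsto (hg.tendsto.mono_left nhdsWithin_le_nhds)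
    (eventually_nhdsWithin_of_forall (s := Set.Iio 0) fun s hs => ?_))
    (ge_of_tendsto (hg.tendsto.mono_left nhdsWithin_le_nhds)
    (eventually_nhdsWithin_of_forall (s := Set.Ioi 0) fun s hs => ?_))
  · nlinarith [h s, Set.mem_Iio.1 hs]
  · nlinarith [h s, Set.mem_Ioi.1 hs]

theorem eq_of_forall_sum_mul_sub_nonneg {ι : Type*} [Fintype ι] [DecidableEq ι]
    {μ : (ι → ℝ) → ι → ℝ} {x₀ c : ι → ℝ} (hμ : ContinuousAt μ x₀)
    (h : ∀ x, 0 ≤ ∑ i, (x i - x₀ i) * (μ x i - c i)) : μ x₀ = c := by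
  funext i
  have hline : ContinuousAt (fun s : ℝ => x₀ + Pi.single i s) 0 :=
    (continuous_const.add (continuous_single i)).continuousAt
  have hg : ContinuousAt (fun s => μ (x₀ + Pi.single i s) i) 0 :=
    (continuous_apply i).continuousAt.comp (hμ.comp_of_eq hline (by simp))
  simpa using eq_of_forall_mul_sub_nonneg hg fun s => by
    have hs := h (x₀ + Pi.single i s)
    simp only [Pi.add_apply, add_sub_cancel_left] at hs
    rwa [Fintype.sum_eq_single i (fun j hj => by simp [hj]), Pi.single_eq_same] at hs

def DependsOnPrefix {β : Type*} (nh nm : ℕ) (G : (Fin T → H) → (Fin T → M) → β) : Prop :=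
  ∀ ⦃h h' : Fin T → H⦄ ⦃m m' : Fin T → M⦄, (∀ s : Fin T, (s : ℕ) < nh → h s = h' s) →
    (∀ s : Fin T, (s : ℕ) < nm → m s = m' s) → G h m = G h' m'

omit [Fintype H] [Fintype M] [NeZero T] [Nonempty H] [Nonempty M] in
theorem update_apply_eq_of_lt_succ {α : Type*} {g g' : Fin T → α} {t : Fin T}
    (he : ∀ s : Fin T, (s : ℕ) < t → g s = g' s) (x : α) (s : Fin T) (hs : (s : ℕ) < t + 1) :
    update g t x s = update g' t x s := by
  rcases eq_or_ne s t with rfl | hst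
  · simp
  · rw [update_of_ne hst, update_of_ne hst]
    exact he s (lt_of_le_of_ne (Nat.le_of_lt_succ hs) (Fin.val_ne_of_ne hst))

namespace DependsOnPrefix

omit [Fintype H] [Fintype M] [NeZero T] [Nonempty H] [Nonempty M]

variable {β : Type*} {nh nm : ℕ} {G : (Fin T → H) → (Fin T → M) → β}

theorem mono {nh' nm' : ℕ} (hG : DependsOnPrefix nh nm G) (hh : nh ≤ nh') (hm : nm ≤ nm') :
    DependsOnPrefix nh' nm' G :=
  fun _ _ _ _ eh em => hG (fun s hs => eh s (hs.trans_le hh)) (fun s hs => em s (hs.trans_le hm))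

theorem apply_update_left (hG : DependsOnPrefix nh nm G) {t : Fin T} (ht : nh ≤ t)
    (h : Fin T → H) (m : Fin T → M) (a : H) : G (update h t a) m = G h m :=
  hG (fun _ hs => update_of_ne (Fin.ne_of_val_ne (by omega)) _ _) (fun _ _ => rfl)

theorem apply_update_right (hG : DependsOnPrefix nh nm G) {t : Fin T} (ht : nm ≤ t)
    (h : Fin T → H) (m : Fin T → M) (b : M) : G h (update m t b) = G h m :=
  hG (fun _ _ => rfl) (fun _ hs => update_of_ne (Fin.ne_of_val_ne (by omega)) _ _)

theorem apply_update_update (hG : DependsOnPrefix nh nm G) {t : Fin T} (hh : nh ≤ t)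
    (hm : nm ≤ t) (h : Fin T → H) (m : Fin T → M) (a : H) (b : M) :
    G (update h t a) (update m t b) = G h m :=
  hG (fun _ hs => update_of_ne (Fin.ne_of_val_ne (by omega)) _ _)
    (fun _ hs => update_of_ne (Fin.ne_of_val_ne (by omega)) _ _)

theorem comp {γ : Type*} (hG : DependsOnPrefix nh nm G) (g : β → γ) :
    DependsOnPrefix nh nm (fun h m => g (G h m)) :=
  fun _ _ _ _ eh em => congrArg g (hG eh em)

theorem of_le_card (hh : T ≤ nh) (hm : T ≤ nm) (G : (Fin T → H) → (Fin T → M) → β) :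
    DependsOnPrefix nh nm G := by
  intro h h' m m' eh em
  rw [funext fun s => eh s (by omega), funext fun s => em s (by omega)]

end DependsOnPrefix

section Marginalization

omit [NeZero T] [Nonempty H] [Nonempty M]

omit [Fintype M] in
theorem HumanModel.dependsOnPrefix (P : HumanModel T H M) (t : Fin T) :
    DependsOnPrefix t (t + 1) (P.p t) :=
  fun _ _ _ _ eh em => P.causal t _ _ _ _ eh (fun s hs => em s (Nat.lt_succ_of_le hs))

omit [Fintype H] in
theorem MachinePolicy.dependsOnPrefix (Q : MachinePolicy T H M) (t : Fin T) :
    DependsOnPrefix t t (Q.q t) :=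
  fun _ _ _ _ eh em => Q.causal t _ _ _ _ eh em

variable (P : HumanModel T H M) (Q : MachinePolicy T H M)

noncomputable def prefixWeight (n : ℕ) (h : Fin T → H) (m : Fin T → M) : ℝ :=
  ∏ s ∈ univ.filter (fun s : Fin T => (s : ℕ) < n), P.p s h m (h s) * Q.q s h m (m s)

theorem prefixWeight_zero (h : Fin T → H) (m : Fin T → M) : prefixWeight P Q 0 h m = 1 := by
  simp [prefixWeight]

theorem prefixWeight_card : prefixWeight P Q T = jointPMF P Q := by
  ext h m
  simp [prefixWeight, jointPMF, HumanModel.cc, MachinePolicy.cc, prod_mul_distrib]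

theorem prefixWeight_succ (t : Fin T) (h : Fin T → H) (m : Fin T → M) :
    prefixWeight P Q (t + 1) h m
      = prefixWeight P Q t h m * (P.p t h m (h t) * Q.q t h m (m t)) := by
  have : univ.filter (fun s : Fin T => (s : ℕ) < t + 1)
      = insert t (univ.filter (fun s : Fin T => (s : ℕ) < t)) := by
    ext s
    simp [Fin.ext_iff]
    omega
  rw [prefixWeight, this, prod_insert (by simp), mul_comm, prefixWeight]

theorem dependsOnPrefix_prefixWeight (n : ℕ) : DependsOnPrefix n n (prefixWeight P Q n) := by
  intro h h' m m' eh em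
  refine prod_congr rfl fun s hs => ?_
  rw [mem_filter] at hs
  have hP := P.dependsOnPrefix s (fun u hu => eh u (by omega)) (fun u hu => em u (by omega))
  have hQ := Q.dependsOnPrefix s (fun u hu => eh u (by omega)) (fun u hu => em u (by omega))
  rw [hP, hQ, eh s hs.2, em s hs.2]

noncomputable def condExpStep (t : Fin T) (G : (Fin T → H) → (Fin T → M) → ℝ)
    (h : Fin T → H) (m : Fin T → M) : ℝ :=
  ∑ b : M, ∑ a : H, Q.q t h m b * (P.p t h (update m t b) a * G (update h t a) (update m t b))

theorem card_mul_sum_prefixWeight_succ (t : Fin T) (G : (Fin T → H) → (Fin T → M) → ℝ) :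
    (Fintype.card H * Fintype.card M) * ∑ h, ∑ m, prefixWeight P Q (t + 1) h m * G h m
      = ∑ h, ∑ m, prefixWeight P Q t h m * condExpStep P Q t G h m := by
  rw [← sum_sum_update_update t]
  refine sum_congr rfl fun h _ => sum_congr rfl fun m _ => ?_
  simp only [condExpStep, mul_sum]
  refine sum_congr rfl fun b _ => sum_congr rfl fun a _ => ?_
  rw [prefixWeight_succ, (dependsOnPrefix_prefixWeight P Q t).apply_update_update le_rfl le_rfl,
    (Q.dependsOnPrefix t).apply_update_update le_rfl le_rfl,
    (P.dependsOnPrefix t).apply_update_left le_rfl,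
    update_self, update_self]
  ring

theorem condExpStep_eq_sum (t : Fin T) {G : (Fin T → H) → (Fin T → M) → ℝ}
    (hG : DependsOnPrefix t (t + 1) G) (h : Fin T → H) (m : Fin T → M) :
    condExpStep P Q t G h m = ∑ b : M, Q.q t h m b * G h (update m t b) := by
  refine sum_congr rfl fun b _ => ?_
  simp only [hG.apply_update_left le_rfl, ← mul_sum, ← sum_mul, P.sum_one, one_mul]

-- Sums run over all of `Fin T → H` and `Fin T → M`, so integrating out the steps `≥ n`
-- over-counts by `(|H| |M|) ^ (T - n)`.
theorem card_pow_mul_expVal {n : ℕ} (hn : n ≤ T) {G : (Fin T → H) → (Fin T → M) → ℝ}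
    (hG : DependsOnPrefix n n G) :
    (Fintype.card H * Fintype.card M : ℝ) ^ (T - n) * expVal P Q G
      = ∑ h, ∑ m, prefixWeight P Q n h m * G h m := by
  induction hn using Nat.decreasingInduction generalizing G with
  | self => simp [expVal, prefixWeight_card]
  | of_succ k hk ih =>
    have hstep : ∀ h m, condExpStep P Q ⟨k, hk⟩ G h m = G h m := fun h m => by
      simp only [condExpStep_eq_sum P Q ⟨k, hk⟩ (hG.mono (le_refl k) k.le_succ),
        hG.apply_update_right (t := ⟨k, hk⟩) le_rfl, ← sum_mul, Q.sum_one, one_mul]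
    calc (Fintype.card H * Fintype.card M : ℝ) ^ (T - k) * expVal P Q G
        = (Fintype.card H * Fintype.card M) *
            ((Fintype.card H * Fintype.card M : ℝ) ^ (T - (k + 1)) * expVal P Q G) := by
          rw [← mul_assoc, ← pow_succ', show T - (k + 1) + 1 = T - k by omega]
      _ = ∑ h, ∑ m, prefixWeight P Q k h m * condExpStep P Q ⟨k, hk⟩ G h m := by
          rw [ih (hG.mono k.le_succ k.le_succ)]
          exact card_mul_sum_prefixWeight_succ P Q ⟨k, hk⟩ G
      _ = ∑ h, ∑ m, prefixWeight P Q k h m * G h m := by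
          simp only [hstep]

end Marginalization

section Expectation

omit [NeZero T] [Nonempty H] [Nonempty M]

variable (P : HumanModel T H M) (Q : MachinePolicy T H M)

theorem expVal_sum {ι : Type*} (s : Finset ι) (G : ι → (Fin T → H) → (Fin T → M) → ℝ) :
    expVal P Q (fun h m => ∑ i ∈ s, G i h m) = ∑ i ∈ s, expVal P Q (G i) := by
  simp only [expVal, mul_sum]
  exact (sum_congr rfl fun _ _ => sum_comm).trans sum_comm

theorem expVal_sub (G G' : (Fin T → H) → (Fin T → M) → ℝ) :
    expVal P Q (fun h m => G h m - G' h m) = expVal P Q G - expVal P Q G' := by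
  simp only [expVal, mul_sub, sum_sub_distrib]

theorem expVal_const_mul (x : ℝ) (G : (Fin T → H) → (Fin T → M) → ℝ) :
    expVal P Q (fun h m => x * G h m) = x * expVal P Q G := by
  simp only [expVal, mul_sum, mul_left_comm]

theorem expVal_congr_cc {P' : HumanModel T H M} (hcc : ∀ h m, P.cc h m = P'.cc h m)
    (G : (Fin T → H) → (Fin T → M) → ℝ) : expVal P Q G = expVal P' Q G := by
  simp only [expVal, jointPMF, hcc]

theorem humanEntropy_eq_neg_expVal :
    humanEntropy P Q = -expVal P Q (fun h m => Real.log (P.cc h m)) := by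
  simp only [humanEntropy, expVal, mul_neg, sum_neg_distrib]

end Expectation

section Tower

omit [NeZero T]

variable (P : HumanModel T H M) (Q : MachinePolicy T H M)

theorem card_mul_card_pos : (0 : ℝ) < Fintype.card H * Fintype.card M := by
  have := Fintype.card_pos (α := H)
  have := Fintype.card_pos (α := M)
  positivity

theorem sum_jointPMF : ∑ h, ∑ m, jointPMF P Q h m = 1 := by
  have key := card_pow_mul_expVal P Q (Nat.zero_le T) (G := fun _ _ => 1)
    fun _ _ _ _ _ _ => rfl
  simp only [expVal, prefixWeight_zero, mul_one, sum_const, card_univ, Fintype.card_fun,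
    Fintype.card_fin, nsmul_eq_mul, Nat.cast_pow, Nat.sub_zero, ← mul_pow] at key
  exact mul_left_cancel₀ (pow_ne_zero T card_mul_card_pos.ne') (key.trans (mul_one _).symm)

theorem expVal_const (x : ℝ) : expVal P Q (fun _ _ => x) = x := by
  simp only [expVal, ← sum_mul, sum_jointPMF, one_mul]

omit [Fintype H] [Nonempty H] [Nonempty M] in
theorem dependsOnPrefix_sum_machine (t : Fin T) {G : (Fin T → H) → (Fin T → M) → ℝ}
    (hG : DependsOnPrefix t (t + 1) G) :
    DependsOnPrefix t t (fun h m => ∑ b : M, Q.q t h m b * G h (update m t b)) := by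
  intro h h' m m' eh em
  refine sum_congr rfl fun b _ => ?_
  rw [Q.dependsOnPrefix t eh em, hG eh (update_apply_eq_of_lt_succ em b)]

theorem expVal_eq_expVal_sum_machine (t : Fin T) {G : (Fin T → H) → (Fin T → M) → ℝ}
    (hG : DependsOnPrefix t (t + 1) G) :
    expVal P Q G = expVal P Q (fun h m => ∑ b : M, Q.q t h m b * G h (update m t b)) := by
  have hc := card_mul_card_pos (H := H) (M := M)
  refine mul_left_cancel₀ (pow_ne_zero (T - t) hc.ne') ?_
  calc (Fintype.card H * Fintype.card M : ℝ) ^ (T - t) * expVal P Q G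
      = (Fintype.card H * Fintype.card M) *
          ((Fintype.card H * Fintype.card M : ℝ) ^ (T - (t + 1)) * expVal P Q G) := by
        rw [← mul_assoc, ← pow_succ', show T - (t + 1) + 1 = T - t by omega]
    _ = ∑ h, ∑ m, prefixWeight P Q t h m * condExpStep P Q t G h m := by
        rw [card_pow_mul_expVal P Q t.isLt (hG.mono (t : ℕ).le_succ le_rfl)]
        exact card_mul_sum_prefixWeight_succ P Q t G
    _ = _ := by
        simp only [condExpStep_eq_sum P Q t hG]
        exact (card_pow_mul_expVal P Q t.isLt.le (dependsOnPrefix_sum_machine Q t hG)).symm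

end Tower

section Gibbs

omit [NeZero T]

variable (Q : MachinePolicy T H M)

omit [Fintype M] [Nonempty H] [Nonempty M] in
theorem HumanModel.cc_nonneg (P : HumanModel T H M) (h : Fin T → H) (m : Fin T → M) :
    0 ≤ P.cc h m :=
  prod_nonneg fun t _ => P.nonneg t h m (h t)

omit [Fintype H] [Nonempty H] [Nonempty M] in
theorem MachinePolicy.cc_nonneg (h : Fin T → H) (m : Fin T → M) : 0 ≤ Q.cc h m :=
  prod_nonneg fun t _ => Q.nonneg t h m (m t)

theorem expVal_log_cc_le (P R : HumanModel T H M) (hR : ∀ h m, 0 < R.cc h m) :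
    expVal P Q (fun h m => Real.log (R.cc h m)) ≤ expVal P Q (fun h m => Real.log (P.cc h m)) := by
  have key : ∀ h m, jointPMF P Q h m * Real.log (R.cc h m)
      ≤ jointPMF P Q h m * Real.log (P.cc h m) + (jointPMF R Q h m - jointPMF P Q h m) := by
    intro h m
    have := mul_le_mul_of_nonneg_left
      (Real.mul_log_le_mul_log_add_sub (P.cc_nonneg h m) (hR h m)) (Q.cc_nonneg h m)
    simp only [jointPMF]
    linarith
  calc expVal P Q (fun h m => Real.log (R.cc h m))
      ≤ ∑ h, ∑ m, (jointPMF P Q h m * Real.log (P.cc h m)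
          + (jointPMF R Q h m - jointPMF P Q h m)) :=
        sum_le_sum fun h _ => sum_le_sum fun m _ => key h m
    _ = expVal P Q (fun h m => Real.log (P.cc h m)) := by
        simp only [sum_add_distrib, sum_sub_distrib, sum_jointPMF, sub_self, add_zero, expVal]

end Gibbs

section Partition

variable (Q : MachinePolicy T H M) (φ : (Fin T → H) → (Fin T → M) → ℝ)

omit [Nonempty H] [Nonempty M] in
theorem Zaux_pos (k : ℕ) (h : Fin T → H) (m : Fin T → M) : 0 < Zaux Q φ k h m := by
  cases k <;> exact Real.exp_pos _

omit [Nonempty H] [Nonempty M] in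
theorem Zcond_pos (t : Fin T) (h : Fin T → H) (m : Fin T → M) : 0 < Zcond Q φ t h m :=
  Zaux_pos Q φ _ h m

omit [Nonempty M] in
theorem Zmarg_pos (t : Fin T) (h : Fin T → H) (m : Fin T → M) : 0 < Zmarg Q φ t h m :=
  sum_pos (fun _ _ => Zcond_pos Q φ t _ m) univ_nonempty

omit [Nonempty M] in
theorem gibbsCC_pos (h : Fin T → H) (m : Fin T → M) : 0 < gibbsCC Q φ h m :=
  prod_pos fun t _ => div_pos (Zcond_pos Q φ t h m) (Zmarg_pos Q φ t h m)

omit [Nonempty H] [Nonempty M] in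
theorem dependsOnPrefix_Zaux (k : ℕ) : DependsOnPrefix (T - k) (T - k) (Zaux Q φ k) := by
  induction k with
  | zero => exact DependsOnPrefix.of_le_card le_rfl le_rfl _
  | succ k ih =>
    intro h h' m m' eh em
    have hk : T - (k + 1) = T - 1 - k := by omega
    rw [hk] at eh em
    simp only [Zaux]
    refine congrArg Real.exp (sum_congr rfl fun b _ => ?_)
    rw [Q.dependsOnPrefix _ eh em]
    congr 2
    refine sum_congr rfl fun a _ => ih (fun s hs => ?_) (fun s hs => ?_)
    · exact update_apply_eq_of_lt_succ eh a s (by simp only; omega)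
    · exact update_apply_eq_of_lt_succ em b s (by simp only; omega)

omit [Nonempty H] [Nonempty M] in
theorem dependsOnPrefix_Zcond (t : Fin T) : DependsOnPrefix (t + 1) (t + 1) (Zcond Q φ t) :=
  (dependsOnPrefix_Zaux Q φ _).mono (by omega) (by omega)

omit [Nonempty H] [Nonempty M] in
theorem dependsOnPrefix_Zmarg (t : Fin T) : DependsOnPrefix t (t + 1) (Zmarg Q φ t) :=
  fun _ _ _ _ eh em => sum_congr rfl fun a _ =>
    dependsOnPrefix_Zcond Q φ t (update_apply_eq_of_lt_succ eh a) em

omit [Nonempty H] [Nonempty M] in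
theorem Zcond_of_last {t : Fin T} (ht : (t : ℕ) + 1 = T) (h : Fin T → H) (m : Fin T → M) :
    Zcond Q φ t h m = Real.exp (φ h m) := by
  rw [Zcond, show T - 1 - (t : ℕ) = 0 by omega, Zaux]

omit [Nonempty H] [Nonempty M] in
theorem log_Zcond_eq_sum {t t' : Fin T} (htt' : (t' : ℕ) = t + 1) (h : Fin T → H)
    (m : Fin T → M) :
    Real.log (Zcond Q φ t h m)
      = ∑ b : M, Q.q t' h m b * Real.log (Zmarg Q φ t' h (update m t' b)) := by
  obtain ⟨k, hk⟩ : ∃ k, T - 1 - (t : ℕ) = k + 1 := ⟨T - 1 - t', by omega⟩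
  have ht' : (⟨T - 1 - k, idx_lt T k⟩ : Fin T) = t' := Fin.ext (by simp; omega)
  rw [Zcond, hk, Zaux, Real.log_exp, ht']
  simp only [Zmarg, Zcond, show T - 1 - (t' : ℕ) = k by omega]

end Partition

section LogLikelihood

variable (P : HumanModel T H M) (Q : MachinePolicy T H M) (φ : (Fin T → H) → (Fin T → M) → ℝ)

theorem expVal_log_Zcond {t t' : Fin T} (htt' : (t' : ℕ) = t + 1) :
    expVal P Q (fun h m => Real.log (Zcond Q φ t h m))
      = expVal P Q (fun h m => Real.log (Zmarg Q φ t' h m)) := by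
  rw [expVal_eq_expVal_sum_machine P Q t' ((dependsOnPrefix_Zmarg Q φ t').comp Real.log)]
  simp only [log_Zcond_eq_sum Q φ htt']

theorem expVal_log_Zmarg_zero :
    expVal P Q (fun h m => Real.log (Zmarg Q φ 0 h m)) = dualPartition Q φ := by
  have hG := (dependsOnPrefix_Zmarg Q φ 0).comp Real.log
  have hconst := dependsOnPrefix_sum_machine Q 0 hG
  rw [expVal_eq_expVal_sum_machine P Q 0 hG, ← expVal_const P Q (dualPartition Q φ)]
  exact congrArg _ (funext₂ fun h m => hconst (by simp) (by simp))

-- By the tower property the terms `log Z_λ(h_t | h^{t-1}, m^t) - log Z_λ(h^{t-1}, m^t)` telescope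
-- in expectation; only the machine's first move survives.
theorem expVal_log_gibbsCC :
    expVal P Q (fun h m => Real.log (gibbsCC Q φ h m)) = expVal P Q φ - dualPartition Q φ := by
  have hlog : ∀ h m, Real.log (gibbsCC Q φ h m)
      = ∑ t : Fin T, (Real.log (Zcond Q φ t h m) - Real.log (Zmarg Q φ t h m)) := fun h m => by
    rw [gibbsCC, Real.log_prod fun t _ => (div_pos (Zcond_pos Q φ t h m) (Zmarg_pos Q φ t h m)).ne']
    exact sum_congr rfl fun t _ =>
      Real.log_div (Zcond_pos Q φ t h m).ne' (Zmarg_pos Q φ t h m).ne'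
  let a : ℕ → ℝ := fun n =>
    if hn : n < T then expVal P Q (fun h m => Real.log (Zmarg Q φ ⟨n, hn⟩ h m)) else expVal P Q φ
  have hcond : ∀ t : Fin T,
      expVal P Q (fun h m => Real.log (Zcond Q φ t h m)) = a (t + 1) := fun t => by
    by_cases ht : (t : ℕ) + 1 < T
    · simp only [a, dif_pos ht]
      exact expVal_log_Zcond P Q φ rfl
    · simp only [a, dif_neg ht, Zcond_of_last Q φ (by omega : (t : ℕ) + 1 = T), Real.log_exp]
  have hmarg : ∀ t : Fin T,
      expVal P Q (fun h m => Real.log (Zmarg Q φ t h m)) = a t := fun t => by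
    simp only [a, dif_pos t.isLt]
  have ha0 : a 0 = dualPartition Q φ := by
    have hT : 0 < T := Nat.pos_of_ne_zero (NeZero.ne T)
    have h0 : (⟨0, hT⟩ : Fin T) = 0 := Fin.ext (by simp)
    simp only [a, dif_pos hT, h0]
    exact expVal_log_Zmarg_zero P Q φ
  calc expVal P Q (fun h m => Real.log (gibbsCC Q φ h m))
      = ∑ t : Fin T, (a (t + 1) - a t) := by
        simp only [hlog, expVal_sum, expVal_sub, hcond, hmarg]
    _ = a T - a 0 := by
        rw [Fin.sum_univ_eq_sum_range (fun n => a (n + 1) - a n), sum_range_sub]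
    _ = expVal P Q φ - dualPartition Q φ := by
        rw [ha0]
        simp only [a, dif_neg (lt_irrefl T)]

end LogLikelihood

theorem expVal_log_gibbsCC_linComb {F : Type*} [Fintype F] (P : HumanModel T H M)
    (Q : MachinePolicy T H M) (f : F → (Fin T → H) → (Fin T → M) → ℝ) (lam : F → ℝ) :
    expVal P Q (fun h m => Real.log (gibbsCC Q (fun h' m' => ∑ i, lam i * f i h' m') h m))
      = ∑ i, lam i * expVal P Q (f i) - dualPartition Q (fun h m => ∑ i, lam i * f i h m) := by
  rw [expVal_log_gibbsCC, expVal_sum]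
  simp only [expVal_const_mul]

section GibbsModel

variable (Q : MachinePolicy T H M)

omit [Nonempty H] [Nonempty M] in
theorem IsGibbs.cc_eq {φ : (Fin T → H) → (Fin T → M) → ℝ} {P : HumanModel T H M}
    (hP : IsGibbs Q φ P) (h : Fin T → H) (m : Fin T → M) : P.cc h m = gibbsCC Q φ h m :=
  prod_congr rfl fun t _ => by rw [hP t h m (h t), update_eq_self]

noncomputable def gibbsModel (φ : (Fin T → H) → (Fin T → M) → ℝ) : HumanModel T H M where
  p t h m a := Zcond Q φ t (update h t a) m / Zmarg Q φ t h m
  causal t _ _ _ _ eh em := by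
    have em' : ∀ s : Fin T, (s : ℕ) < t + 1 → _ := fun s hs => em s (Nat.le_of_lt_succ hs)
    funext a
    rw [dependsOnPrefix_Zcond Q φ t (update_apply_eq_of_lt_succ eh a) em',
      dependsOnPrefix_Zmarg Q φ t eh em']
  nonneg t h m _ := div_nonneg (Zcond_pos Q φ t _ m).le (Zmarg_pos Q φ t h m).le
  sum_one t h m := by rw [← sum_div]; exact div_self (Zmarg_pos Q φ t h m).ne'

omit [Nonempty M] in
theorem isGibbs_gibbsModel (φ : (Fin T → H) → (Fin T → M) → ℝ) :
    IsGibbs Q φ (gibbsModel Q φ) :=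
  fun _ _ _ _ => rfl

omit [Nonempty M] in
theorem gibbsModel_cc (φ : (Fin T → H) → (Fin T → M) → ℝ) :
    (gibbsModel Q φ).cc = gibbsCC Q φ :=
  funext₂ (isGibbs_gibbsModel Q φ).cc_eq

theorem expVal_log_gibbsCC_le (P : HumanModel T H M) (φ : (Fin T → H) → (Fin T → M) → ℝ) :
    expVal P Q (fun h m => Real.log (gibbsCC Q φ h m))
      ≤ expVal P Q (fun h m => Real.log (P.cc h m)) := by
  simpa only [gibbsModel_cc] using
    expVal_log_cc_le Q P (gibbsModel Q φ) (by simpa only [gibbsModel_cc] using gibbsCC_pos Q φ)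

variable {X : Type*} [TopologicalSpace X] {φ : X → (Fin T → H) → (Fin T → M) → ℝ}

omit [Nonempty M] in
theorem continuous_Zaux (hφ : ∀ h m, Continuous fun x => φ x h m) (k : ℕ) (h : Fin T → H)
    (m : Fin T → M) : Continuous fun x => Zaux Q (φ x) k h m := by
  induction k generalizing h m with
  | zero => exact Real.continuous_exp.comp (hφ h m)
  | succ k ih =>
    refine Real.continuous_exp.comp (continuous_finsetSum _ fun b _ => continuous_const.mul ?_)
    exact (continuous_finsetSum _ fun a _ => ih _ _).log fun x =>
      (sum_pos (fun a _ => Zaux_pos Q (φ x) k _ _) univ_nonempty).ne'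

omit [Nonempty M] in
theorem continuous_expVal_gibbsModel (hφ : ∀ h m, Continuous fun x => φ x h m)
    (G : (Fin T → H) → (Fin T → M) → ℝ) :
    Continuous fun x => expVal (gibbsModel Q (φ x)) Q G := by
  simp only [expVal, jointPMF, gibbsModel_cc, gibbsCC]
  refine continuous_finsetSum _ fun h _ => continuous_finsetSum _ fun m _ =>
    ((continuous_finsetProd _ fun t _ => ?_).mul continuous_const).mul continuous_const
  exact (continuous_Zaux Q hφ _ h m).div
    (continuous_finsetSum _ fun a _ => continuous_Zaux Q hφ _ _ m)
    fun x => (Zmarg_pos Q (φ x) t h m).ne'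

end GibbsModel

section MaxEnt

variable {F : Type*} [Fintype F] (Q : MachinePolicy T H M) (f : F → (Fin T → H) → (Fin T → M) → ℝ)

theorem humanEntropy_le_of_isGibbs {lam : F → ℝ} {Plam : HumanModel T H M}
    (hGibbs : IsGibbs Q (fun h m => ∑ i, lam i * f i h m) Plam) (P : HumanModel T H M)
    (hP : ∀ i, expVal P Q (f i) = expVal Plam Q (f i)) :
    humanEntropy P Q ≤ humanEntropy Plam Q := by
  have hgibbs := expVal_log_gibbsCC_le Q P (fun h m => ∑ i, lam i * f i h m)
  rw [humanEntropy_eq_neg_expVal, humanEntropy_eq_neg_expVal, neg_le_neg_iff]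
  simp only [hGibbs.cc_eq]
  rw [expVal_log_gibbsCC_linComb] at hgibbs ⊢
  simpa only [hP] using hgibbs

theorem expVal_eq_of_isGibbs_of_forall_le (Pstar : HumanModel T H M) {lamHat : F → ℝ}
    (hmax : ∀ lam : F → ℝ,
      expVal Pstar Q (fun h m => Real.log (gibbsCC Q (fun h' m' => ∑ i, lam i * f i h' m') h m)) ≤
      expVal Pstar Q (fun h m =>
        Real.log (gibbsCC Q (fun h' m' => ∑ i, lamHat i * f i h' m') h m)))
    {Plam : HumanModel T H M} (hGibbs : IsGibbs Q (fun h m => ∑ i, lamHat i * f i h m) Plam)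
    (i : F) : expVal Plam Q (f i) = expVal Pstar Q (f i) := by
  classical
  have hcont : ∀ i, Continuous fun lam : F → ℝ =>
      expVal (gibbsModel Q (fun h m => ∑ j, lam j * f j h m)) Q (f i) := fun i =>
    continuous_expVal_gibbsModel Q (fun h m => by fun_prop) (f i)
  have key := eq_of_forall_sum_mul_sub_nonneg (x₀ := lamHat)
    (c := fun i => expVal Pstar Q (f i)) (continuous_pi hcont).continuousAt fun lam => by
    have hlik := hmax lam
    have hgibbs := expVal_log_gibbsCC_le Q (gibbsModel Q (fun h m => ∑ j, lam j * f j h m))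
      (fun h m => ∑ j, lamHat j * f j h m)
    simp only [gibbsModel_cc] at hgibbs
    rw [expVal_log_gibbsCC_linComb, expVal_log_gibbsCC_linComb] at hlik hgibbs
    simp only [sub_mul, mul_sub, sum_sub_distrib]
    linarith
  refine (expVal_congr_cc Plam Q (fun h m => ?_) (f i)).trans (congrFun key i)
  rw [hGibbs.cc_eq, gibbsModel_cc]

end MaxEnt

/-- maximum causal entropy = maximum causal log-likelihood, Theorem 2:
with `𝓖 = ∅` and `c_f := E_{P*Q}[f]` computed from the true behavior `P*`, if `λ̂`
maximizes the expected causal log-likelihood `λ ↦ E_{P*Q}[log P_λ(H^T‖M^T)]`, then the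
causal Gibbs model `P_{λ̂}` matches the feature moments and maximizes the causally
conditioned entropy over all human models matching them. -/
theorem maxlikelihood_is_maxent [Nonempty H] [Nonempty M]
    {F : Type*} [Fintype F]
    (Pstar : HumanModel T H M) (Q : MachinePolicy T H M)
    (f : F → (Fin T → H) → (Fin T → M) → ℝ)
    (lamHat : F → ℝ)
    (hmax : ∀ lam : F → ℝ,
      expVal Pstar Q (fun h m => Real.log (gibbsCC Q (fun h' m' => ∑ i, lam i * f i h' m') h m)) ≤
      expVal Pstar Q (fun h m =>
        Real.log (gibbsCC Q (fun h' m' => ∑ i, lamHat i * f i h' m') h m)))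
    (Plam : HumanModel T H M)
    (hGibbs : IsGibbs Q (fun h m => ∑ i, lamHat i * f i h m) Plam) :
    (∀ i, expVal Plam Q (f i) = expVal Pstar Q (f i)) ∧
      ∀ P : HumanModel T H M,
        (∀ i, expVal P Q (f i) = expVal Pstar Q (f i)) →
        humanEntropy P Q ≤ humanEntropy Plam Q := by
  have hmom := expVal_eq_of_isGibbs_of_forall_le Q f Pstar hmax hGibbs
  exact ⟨hmom, fun P hP =>
    humanEntropy_le_of_isGibbs Q f hGibbs P fun i => (hP i).trans (hmom i).symm⟩
end

section
/- (Factorization of the backward recursion under decomposable features; key identity in the proof of the paper's Markov-structure lemma.) Suppose the machine policy Q is one-step Markov, Q(m_t | h^{t-1}, m^{t-1}) = Q_t(m_t | h_{t-1}, m_{t-1}), and all feature functions are decomposable: f(h^T,m^T) = Σ_{t=1}^T f_t(h_t,m_t) and g(h^T,m^T) = Σ_{t=1}^T g_t(h_t,m_t). Then for every λ = (λ_f, λ_g), every t, and all (h^t, m^t), the general backward recursion factorizes as Z_λ(h_t | h^{t-1}, m^t) = exp(λ_f·Σ_{τ=1}^{t-1} f_τ(h_τ,m_τ) + λ_g·Σ_{τ=1}^{t-1}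 g_τ(h_τ,m_τ)) · Ẑ_{λ,t}(h_t | m_t), where Ẑ_{λ,t} is the reduced recursion. -/
variable {T : ℕ} {H M : Type*} [Fintype H] [Fintype M]

variable [NeZero T]

variable [Nonempty H] [Nonempty M]

/-- `Q` is one-step Markov: `Q(m_t | h^{t-1}, m^{t-1})` depends only on `(t, h_{t-1}, m_{t-1})`. -/
def MachinePolicy.IsMarkov (Q : MachinePolicy T H M) : Prop :=
  ∀ (t : Fin T) (h h' : Fin T → H) (m m' : Fin T → M),
    (∀ s : Fin T, (s : ℕ) + 1 = (t : ℕ) → (h s = h' s ∧ m s = m' s)) →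
    Q.q t h m = Q.q t h' m'

/-- The reduced backward recursion `Ẑ_{λ,t}(h_t | m_t)` for decomposable features,
parameterized by fuel `k = (T-1) - t`; `ψ t a b` plays the role of
`λ_f·f_t(a,b) + λ_g·g_t(a,b)`, and the one-step Markov kernel `Q_{t+1}(· | h_t, m_t)` is
evaluated on constant sequences. -/
noncomputable def Zred (Q : MachinePolicy T H M) (ψ : Fin T → H → M → ℝ) :
    ℕ → H → M → ℝ
  | 0, a, b => Real.exp (ψ ⟨T - 1, idx_lt T 0⟩ a b)
  | k + 1, a, b =>
      Real.exp (ψ ⟨T - 1 - (k + 1), idx_lt T (k + 1)⟩ a b +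
        ∑ b' : M, Q.q ⟨T - 1 - k, idx_lt T k⟩ (fun _ => a) (fun _ => b) b' *
          Real.log (∑ a' : H, Zred Q ψ k a' b'))

lemma Zred_pos (Q : MachinePolicy T H M) (ψ : Fin T → H → M → ℝ) :
    ∀ k a b, 0 < Zred Q ψ k a b := by
  intro k a b
  cases k <;> simp [Zred, Real.exp_pos]

lemma Zaux_factor (Q : MachinePolicy T H M) (hQM : Q.IsMarkov)
    (ψ : Fin T → H → M → ℝ) :
    ∀ k, k ≤ T - 1 → ∀ (h : Fin T → H) (m : Fin T → M),
      Zaux Q (fun h' m' => ∑ τ, ψ τ (h' τ) (m' τ)) k h m =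
        Real.exp (∑ τ ∈ Finset.univ.filter
            (fun τ => τ < (⟨T - 1 - k, idx_lt T k⟩ : Fin T)), ψ τ (h τ) (m τ)) *
          Zred Q ψ k (h ⟨T - 1 - k, idx_lt T k⟩) (m ⟨T - 1 - k, idx_lt T k⟩) := by
  intro k
  induction k with
  | zero =>
    intro _ h m
    have hsplit : (Finset.univ : Finset (Fin T)) =
        insert (⟨T - 1, idx_lt T 0⟩ : Fin T)
          (Finset.univ.filter (fun τ => τ < (⟨T - 1 - 0, idx_lt T 0⟩ : Fin T))) := by
      ext τ
      simp only [Finset.mem_univ, Finset.mem_insert, Finset.mem_filter, true_and, true_iff]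
      rcases eq_or_ne τ (⟨T - 1, idx_lt T 0⟩ : Fin T) with h1 | h1
      · exact Or.inl h1
      · right
        have ht := τ.isLt
        have : (τ : ℕ) ≠ T - 1 := fun hc => h1 (Fin.ext hc)
        have hv : (⟨T - 1 - 0, idx_lt T 0⟩ : Fin T).val = T - 1 := rfl
        exact Fin.lt_def.mpr (by rw [hv]; omega)
    have hnot : (⟨T - 1, idx_lt T 0⟩ : Fin T) ∉
        Finset.univ.filter (fun τ => τ < (⟨T - 1 - 0, idx_lt T 0⟩ : Fin T)) := by
      simp [Fin.lt_def]
    simp only [Zaux, Zred]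
    rw [← Real.exp_add]
    congr 1
    conv_lhs => rw [hsplit, Finset.sum_insert hnot]
    have h0 : (⟨T - 1 - 0, idx_lt T 0⟩ : Fin T) = ⟨T - 1, idx_lt T 0⟩ := rfl
    rw [h0]
    ring
  | succ k ih =>
    intro hk h m
    have hk' : k ≤ T - 1 := by omega
    set t : Fin T := ⟨T - 1 - (k + 1), idx_lt T (k + 1)⟩ with htdef
    set t' : Fin T := ⟨T - 1 - k, idx_lt T k⟩ with ht'def
    have htt' : (t' : ℕ) = (t : ℕ) + 1 := by simp [htdef, ht'def]; omega
    -- inner sum computation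
    have hinner : ∀ b : M,
        (∑ a : H, Zaux Q (fun h' m' => ∑ τ, ψ τ (h' τ) (m' τ)) k
            (Function.update h t' a) (Function.update m t' b)) =
          Real.exp (∑ τ ∈ Finset.univ.filter (fun τ => τ < t'),
              ψ τ (h τ) (m τ)) * ∑ a : H, Zred Q ψ k a b := by
      intro b
      rw [Finset.mul_sum]
      refine Finset.sum_congr rfl fun a _ => ?_
      rw [ih hk' (Function.update h t' a) (Function.update m t' b)]
      congr 1
      · congr 1
        refine Finset.sum_congr rfl fun τ hτ => ?_
        have hτt' : τ ≠ t' := by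
          simp only [Finset.mem_filter] at hτ
          exact ne_of_lt hτ.2
        rw [Function.update_of_ne hτt', Function.update_of_ne hτt']
      · rw [Function.update_self, Function.update_self]
    have hsplit : Finset.univ.filter (fun τ => τ < t') =
        insert t (Finset.univ.filter (fun τ => τ < t)) := by
      ext τ
      simp only [Finset.mem_filter, Finset.mem_insert, Finset.mem_univ, true_and]
      rw [Fin.lt_def, Fin.lt_def, htt']
      constructor
      · intro hlt
        rcases eq_or_ne τ t with h1 | h1
        · exact Or.inl h1
        · right
          have : (τ : ℕ) ≠ (t : ℕ) := fun hc => h1 (Fin.ext hc)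
          omega
      · rintro (rfl | h1) <;> omega
    have htnot : t ∉ Finset.univ.filter (fun τ => τ < t) := by simp
    have hQ : ∀ b : M, Q.q t' h m b = Q.q t' (fun _ => h t) (fun _ => m t) b := by
      intro b
      rw [hQM t' h (fun _ => h t) m (fun _ => m t) ?_]
      intro s hs
      have : s = t := Fin.ext (by omega)
      subst this
      exact ⟨rfl, rfl⟩
    have hsumpos : ∀ b : M, (0 : ℝ) < ∑ a : H, Zred Q ψ k a b := fun b =>
      Finset.sum_pos (fun a _ => Zred_pos Q ψ k a b) Finset.univ_nonempty
    simp only [Zaux]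
    have hexp : ∀ b : M,
        Real.log (∑ a : H, Zaux Q (fun h' m' => ∑ τ, ψ τ (h' τ) (m' τ)) k
            (Function.update h t' a) (Function.update m t' b)) =
          (∑ τ ∈ Finset.univ.filter (fun τ => τ < t'), ψ τ (h τ) (m τ)) +
            Real.log (∑ a : H, Zred Q ψ k a b) := by
      intro b
      rw [hinner b, Real.log_mul (Real.exp_ne_zero _) (ne_of_gt (hsumpos b)),
        Real.log_exp]
    calc Real.exp (∑ b : M, Q.q t' h m b *
            Real.log (∑ a : H, Zaux Q (fun h' m' => ∑ τ, ψ τ (h' τ) (m' τ)) k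
              (Function.update h t' a) (Function.update m t' b)))
        = Real.exp (∑ b : M, Q.q t' h m b *
            ((∑ τ ∈ Finset.univ.filter (fun τ => τ < t'), ψ τ (h τ) (m τ)) +
              Real.log (∑ a : H, Zred Q ψ k a b))) := by
          congr 1
          exact Finset.sum_congr rfl fun b _ => by rw [hexp b]
      _ = Real.exp ((∑ τ ∈ Finset.univ.filter (fun τ => τ < t'), ψ τ (h τ) (m τ)) +
            ∑ b : M, Q.q t' (fun _ => h t) (fun _ => m t) b *
              Real.log (∑ a : H, Zred Q ψ k a b)) := by
          congr 1
          have := Q.sum_one t' h m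
          rw [Finset.sum_congr rfl (fun b _ => by rw [hQ b])] at this ⊢
          simp only [mul_add]
          rw [Finset.sum_add_distrib, ← Finset.sum_mul, this, one_mul]
      _ = Real.exp ((∑ τ ∈ Finset.univ.filter (fun τ => τ < t), ψ τ (h τ) (m τ)) +
            (ψ t (h t) (m t) +
              ∑ b : M, Q.q t' (fun _ => h t) (fun _ => m t) b *
                Real.log (∑ a : H, Zred Q ψ k a b))) := by
          rw [hsplit, Finset.sum_insert htnot]; ring_nf
      _ = _ := by rw [Real.exp_add, Zred]

/-- factorization of the backward recursion under decomposable features: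
if `Q` is one-step Markov and all feature functions are decomposable, then
`Z_λ(h_t | h^{t-1}, m^t) = exp(λ_f·Σ_{τ<t} f_τ(h_τ,m_τ) + λ_g·Σ_{τ<t} g_τ(h_τ,m_τ)) ·
Ẑ_{λ,t}(h_t | m_t)`. -/
theorem Zcond_factorizes_of_decomposable [Nonempty H] [Nonempty M]
    {F G : Type*} [Fintype F] [Fintype G]
    (Q : MachinePolicy T H M) (hQM : Q.IsMarkov)
    (f : F → (Fin T → H) → (Fin T → M) → ℝ) (g : G → (Fin T → H) → (Fin T → M) → ℝ)
    (ft : F → Fin T → H → M → ℝ) (gt : G → Fin T → H → M → ℝ)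
    (hf : ∀ i h m, f i h m = ∑ t, ft i t (h t) (m t))
    (hg : ∀ j h m, g j h m = ∑ t, gt j t (h t) (m t))
    (lf : F → ℝ) (lg : G → ℝ) :
    ∀ (t : Fin T) (h : Fin T → H) (m : Fin T → M),
      Zcond Q (fun h' m' => (∑ i, lf i * f i h' m') + (∑ j, lg j * g j h' m')) t h m =
        Real.exp
            ((∑ i, lf i * ∑ τ ∈ Finset.univ.filter (fun τ => τ < t), ft i τ (h τ) (m τ)) +
              (∑ j, lg j * ∑ τ ∈ Finset.univ.filter (fun τ => τ < t), gt j τ (h τ) (m τ))) *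
          Zred Q (fun t' a' b' => (∑ i, lf i * ft i t' a' b') + (∑ j, lg j * gt j t' a' b'))
            (T - 1 - t.val) (h t) (m t) := by
  intro t h m
  set ψ : Fin T → H → M → ℝ :=
    fun t' a' b' => (∑ i, lf i * ft i t' a' b') + (∑ j, lg j * gt j t' a' b') with hψ
  have hφ : (fun h' m' => (∑ i, lf i * f i h' m') + (∑ j, lg j * g j h' m')) =
      (fun h' m' => ∑ τ, ψ τ (h' τ) (m' τ)) := by
    funext h' m'
    simp only [hψ, hf, hg, Finset.mul_sum]
    rw [Finset.sum_comm, Finset.sum_comm (s := Finset.univ) (γ := G),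
      Finset.sum_add_distrib]
  have hexp : (∑ i, lf i * ∑ τ ∈ Finset.univ.filter (fun τ => τ < t), ft i τ (h τ) (m τ)) +
      (∑ j, lg j * ∑ τ ∈ Finset.univ.filter (fun τ => τ < t), gt j τ (h τ) (m τ)) =
      ∑ τ ∈ Finset.univ.filter (fun τ => τ < t), ψ τ (h τ) (m τ) := by
    simp only [hψ, Finset.mul_sum]
    rw [Finset.sum_comm, Finset.sum_comm (s := Finset.univ) (γ := G),
      Finset.sum_add_distrib]
  have hkt : (⟨T - 1 - (T - 1 - t.val), idx_lt T (T - 1 - t.val)⟩ : Fin T) = t := by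
    have := t.isLt
    apply Fin.ext
    show T - 1 - (T - 1 - t.val) = t.val
    omega
  rw [Zcond, hφ, Zaux_factor Q hQM ψ (T - 1 - t.val) (by omega) h m, hkt, hexp]
end
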